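/- Let M, U, V, W : ℝ² → ℝ be smooth functions of (θ, v) satisfying the non-polarized colliding plane wave evolution equations: U_{θv} = U_θ U_v; V_{θv} = ½(U_θ V_v + U_v V_θ) − (V_θ W_v + V_v W_θ) tanh W; W_{θv} = ½(U_θ W_v + U_v W_θ) + V_θ V_v sinh W cosh W; M_{θv} = ½(−U_θ U_v + V_θ V_v cosh² W + W_θ W_v). Define the θ-constraint function H = U_{θθ} − ½(U_θ² + V_θ² cosh² W + W_θ²) + U_θ M_θ. Then H satisfies the propagation equation H_v = U_v H; in particular, if H vanishes on a line v = v₀, then H vanishes identically, so the θ-constraint is preserved by the evolution equations. -/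

import Mathlib

/-!
Differentiating `H` in `v` and substituting the evolution equations, together with
`U_{θθv} = (U_{θθ} + U_θ²) U_v` (from `U_{θv} = U_θ U_v` and the symmetry of mixed partials),
every term cancels except `U_v H`. Hence `H e^{-U}` is constant along each line `θ = const`,
so `H` vanishes identically as soon as it vanishes on one line `v = v₀`.
-/

open Real

/-- Partial derivative with respect to the first variable `θ`. -/
noncomputable def pd1 (F : ℝ → ℝ → ℝ) : ℝ → ℝ → ℝ := fun θ v => deriv (fun t => F t v) θ

/-- Partial derivative with respect to the second variable `v`. -/
noncomputable def pd2 (F : ℝ → ℝ → ℝ) : ℝ → ℝ → ℝ := fun θ v => deriv (fun s => F θ s) v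

section PartialDerivatives

variable {F : ℝ → ℝ → ℝ} {m n : WithTop ℕ∞} {θ v : ℝ}

theorem pd1_eq_fderiv (hF : DifferentiableAt ℝ (fun p : ℝ × ℝ => F p.1 p.2) (θ, v)) :
    pd1 F θ v = fderiv ℝ (fun p : ℝ × ℝ => F p.1 p.2) (θ, v) (1, 0) :=
  (hF.hasFDerivAt.comp_hasDerivAt (l := fun p : ℝ × ℝ => F p.1 p.2) θ
    ((hasDerivAt_id θ).prodMk (hasDerivAt_const θ v))).deriv

theorem pd2_eq_fderiv (hF : DifferentiableAt ℝ (fun p : ℝ × ℝ => F p.1 p.2) (θ, v)) :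
    pd2 F θ v = fderiv ℝ (fun p : ℝ × ℝ => F p.1 p.2) (θ, v) (0, 1) :=
  (hF.hasFDerivAt.comp_hasDerivAt (l := fun p : ℝ × ℝ => F p.1 p.2) v
    ((hasDerivAt_const v θ).prodMk (hasDerivAt_id v))).deriv

theorem hasDerivAt_pd1 (hF : DifferentiableAt ℝ (fun p : ℝ × ℝ => F p.1 p.2) (θ, v)) :
    HasDerivAt (fun t => F t v) (pd1 F θ v) θ :=
  (hF.comp (f := fun t => (t, v)) θ (by fun_prop)).hasDerivAt

theorem hasDerivAt_pd2 (hF : DifferentiableAt ℝ (fun p : ℝ × ℝ => F p.1 p.2) (θ, v)) :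
    HasDerivAt (fun s => F θ s) (pd2 F θ v) v :=
  (hF.comp (f := fun s => (θ, s)) v (by fun_prop)).hasDerivAt

theorem ContDiff.pd1 (hF : ContDiff ℝ n (fun p : ℝ × ℝ => F p.1 p.2)) (hmn : m + 1 ≤ n) :
    ContDiff ℝ m (fun p : ℝ × ℝ => pd1 F p.1 p.2) := by
  have hd := hF.differentiable (one_pos.trans_le (le_add_self.trans hmn)).ne'
  simp_rw [pd1_eq_fderiv (hd _)]
  exact (hF.fderiv_right hmn).clm_apply contDiff_const

theorem ContDiff.pd2 (hF : ContDiff ℝ n (fun p : ℝ × ℝ => F p.1 p.2)) (hmn : m + 1 ≤ n) :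
    ContDiff ℝ m (fun p : ℝ × ℝ => pd2 F p.1 p.2) := by
  have hd := hF.differentiable (one_pos.trans_le (le_add_self.trans hmn)).ne'
  simp_rw [pd2_eq_fderiv (hd _)]
  exact (hF.fderiv_right hmn).clm_apply contDiff_const

theorem pd1_fderiv_apply {G : ℝ × ℝ → ℝ} (hG : ContDiff ℝ 2 G) (w : ℝ × ℝ) :
    pd1 (fun t s => fderiv ℝ G (t, s) w) θ v = fderiv ℝ (fderiv ℝ G) (θ, v) (1, 0) w := by
  have hG' := (hG.fderiv_right (m := 1) le_rfl).differentiable one_ne_zero (θ, v)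
  rw [pd1_eq_fderiv (F := fun t s => fderiv ℝ G (t, s) w)
    (hG'.clm_apply (differentiableAt_const w)), fderiv_clm_apply hG' (differentiableAt_const w)]
  simp

theorem pd2_fderiv_apply {G : ℝ × ℝ → ℝ} (hG : ContDiff ℝ 2 G) (w : ℝ × ℝ) :
    pd2 (fun t s => fderiv ℝ G (t, s) w) θ v = fderiv ℝ (fderiv ℝ G) (θ, v) (0, 1) w := by
  have hG' := (hG.fderiv_right (m := 1) le_rfl).differentiable one_ne_zero (θ, v)
  rw [pd2_eq_fderiv (F := fun t s => fderiv ℝ G (t, s) w)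
    (hG'.clm_apply (differentiableAt_const w)), fderiv_clm_apply hG' (differentiableAt_const w)]
  simp

theorem pd1_pd2_comm (hF : ContDiff ℝ 2 (fun p : ℝ × ℝ => F p.1 p.2)) :
    pd1 (pd2 F) θ v = pd2 (pd1 F) θ v := by
  have hd := hF.differentiable two_ne_zero
  have h1 : pd1 F = fun t s => fderiv ℝ (fun p : ℝ × ℝ => F p.1 p.2) (t, s) (1, 0) :=
    funext₂ fun t s => pd1_eq_fderiv (hd _)
  have h2 : pd2 F = fun t s => fderiv ℝ (fun p : ℝ × ℝ => F p.1 p.2) (t, s) (0, 1) :=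
    funext₂ fun t s => pd2_eq_fderiv (hd _)
  rw [h1, h2, pd1_fderiv_apply hF, pd2_fderiv_apply hF]
  exact (hF.contDiffAt.isSymmSndFDerivAt (by simp)).eq _ _

end PartialDerivatives

theorem eq_zero_of_hasDerivAt_eq_mul {f g g' : ℝ → ℝ} (hg : ∀ s, HasDerivAt g (g' s) s)
    (hf : ∀ s, HasDerivAt f (g' s * f s) s) {v₀ : ℝ} (h₀ : f v₀ = 0) (v : ℝ) : f v = 0 := by
  have hconst : ∀ s, HasDerivAt (fun s => f s * exp (-g s)) 0 s := fun s =>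
    ((hf s).fun_mul (hg s).neg.exp).congr_deriv (by ring)
  have := is_const_of_deriv_eq_zero (fun s => (hconst s).differentiableAt)
    (fun s => (hconst s).deriv) v v₀
  simpa [h₀, exp_ne_zero] using this

structure IsNonpolarizedEvolution (M U V W : ℝ → ℝ → ℝ) : Prop where
  eq_U : ∀ θ v, pd2 (pd1 U) θ v = pd1 U θ v * pd2 U θ v
  eq_V : ∀ θ v, pd2 (pd1 V) θ v
    = (1/2) * (pd1 U θ v * pd2 V θ v + pd2 U θ v * pd1 V θ v)
      - (pd1 V θ v * pd2 W θ v + pd2 V θ v * pd1 W θ v) * tanh (W θ v)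
  eq_W : ∀ θ v, pd2 (pd1 W) θ v
    = (1/2) * (pd1 U θ v * pd2 W θ v + pd2 U θ v * pd1 W θ v)
      + pd1 V θ v * pd2 V θ v * sinh (W θ v) * cosh (W θ v)
  eq_M : ∀ θ v, pd2 (pd1 M) θ v
    = (1/2) * (-(pd1 U θ v * pd2 U θ v) + pd1 V θ v * pd2 V θ v * cosh (W θ v) ^ 2
      + pd1 W θ v * pd2 W θ v)

noncomputable def thetaConstraint (M U V W : ℝ → ℝ → ℝ) : ℝ → ℝ → ℝ := fun θ v =>
  pd1 (pd1 U) θ v - (1/2) * (pd1 U θ v ^ 2 + pd1 V θ v ^ 2 * cosh (W θ v) ^ 2 + pd1 W θ v ^ 2)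
    + pd1 U θ v * pd1 M θ v

variable {M U V W : ℝ → ℝ → ℝ} {θ v : ℝ}

theorem pd2_pd1_pd1_eq (hU : ContDiff ℝ 3 (fun p : ℝ × ℝ => U p.1 p.2))
    (eq_U : ∀ θ v, pd2 (pd1 U) θ v = pd1 U θ v * pd2 U θ v) :
    pd2 (pd1 (pd1 U)) θ v = (pd1 (pd1 U) θ v + pd1 U θ v ^ 2) * pd2 U θ v := by
  have hU1 : ContDiff ℝ 2 (fun p : ℝ × ℝ => pd1 U p.1 p.2) := hU.pd1 le_rfl
  have hU2 : ContDiff ℝ 1 (fun p : ℝ × ℝ => pd2 U p.1 p.2) := hU.pd2 (by norm_num)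
  have hprod : HasDerivAt (fun t => pd1 U t v * pd2 U t v)
      (pd1 (pd1 U) θ v * pd2 U θ v + pd1 U θ v * pd1 (pd2 U) θ v) θ :=
    (hasDerivAt_pd1 (hU1.differentiable two_ne_zero _)).mul
      (hasDerivAt_pd1 (hU2.differentiable one_ne_zero _))
  rw [← pd1_pd2_comm hU1, show pd2 (pd1 U) = fun t s => pd1 U t s * pd2 U t s from funext₂ eq_U,
    pd1, hprod.deriv, pd1_pd2_comm (hU.of_le (by norm_num)), eq_U]
  ring

/-- The `sinh W cosh W` terms cancel in pairs: those that `V_{θv}` contributes through `tanh W`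
against the `v`-derivative of `cosh² W` and against those of `W_{θv}`. -/
theorem hasDerivAt_thetaConstraint (hM : ContDiff ℝ 2 (fun p : ℝ × ℝ => M p.1 p.2))
    (hU : ContDiff ℝ 3 (fun p : ℝ × ℝ => U p.1 p.2))
    (hV : ContDiff ℝ 2 (fun p : ℝ × ℝ => V p.1 p.2))
    (hW : ContDiff ℝ 2 (fun p : ℝ × ℝ => W p.1 p.2)) (h : IsNonpolarizedEvolution M U V W) :
    HasDerivAt (fun s => thetaConstraint M U V W θ s)
      (pd2 U θ v * thetaConstraint M U V W θ v) v := by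
  have hd : ∀ {F : ℝ → ℝ → ℝ}, ContDiff ℝ 2 (fun p : ℝ × ℝ => F p.1 p.2) →
      HasDerivAt (fun s => pd1 F θ s) (pd2 (pd1 F) θ v) v := fun hF =>
    hasDerivAt_pd2 (((hF.pd1 (m := 1) le_rfl).differentiable one_ne_zero) _)
  have dU1 := hd (hU.of_le (by norm_num))
  have dU11 := hasDerivAt_pd2 (((hU.pd1 (m := 2) le_rfl).pd1 (m := 1) le_rfl).differentiable
    one_ne_zero (θ, v))
  have dcoshW := (hasDerivAt_pd2 (hW.differentiable two_ne_zero (θ, v))).cosh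
  have dquad := ((dU1.fun_pow 2).fun_add (((hd hV).fun_pow 2).fun_mul (dcoshW.fun_pow 2))).fun_add
    ((hd hW).fun_pow 2)
  refine ((dU11.fun_sub (dquad.const_mul (1/2))).fun_add (dU1.fun_mul (hd hM))).congr_deriv ?_
  rw [thetaConstraint, pd2_pd1_pd1_eq hU h.eq_U, h.eq_U, h.eq_V, h.eq_W, h.eq_M,
    tanh_eq_sinh_div_cosh]
  field_simp
  ring

/-- For smooth solutions of the non-polarized colliding plane wave evolution equations,
the `θ`-constraint function `H = U_{θθ} − ½(U_θ² + V_θ² cosh² W + W_θ²) + U_θ M_θ`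
satisfies `H_v = U_v H`; in particular, if `H` vanishes on a line `v = v₀` then `H ≡ 0`:
the `θ`-constraint is preserved by the evolution. -/
theorem nonpolarized_theta_constraint_preserved
    (M U V W : ℝ → ℝ → ℝ)
    (hM : ContDiff ℝ (⊤ : ℕ∞) (fun p : ℝ × ℝ => M p.1 p.2))
    (hU : ContDiff ℝ (⊤ : ℕ∞) (fun p : ℝ × ℝ => U p.1 p.2))
    (hV : ContDiff ℝ (⊤ : ℕ∞) (fun p : ℝ × ℝ => V p.1 p.2))
    (hW : ContDiff ℝ (⊤ : ℕ∞) (fun p : ℝ × ℝ => W p.1 p.2))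
    (e1 : ∀ θ v, pd2 (pd1 U) θ v = pd1 U θ v * pd2 U θ v)
    (e2 : ∀ θ v, pd2 (pd1 V) θ v
        = (1/2) * (pd1 U θ v * pd2 V θ v + pd2 U θ v * pd1 V θ v)
          - (pd1 V θ v * pd2 W θ v + pd2 V θ v * pd1 W θ v) * Real.tanh (W θ v))
    (e3 : ∀ θ v, pd2 (pd1 W) θ v
        = (1/2) * (pd1 U θ v * pd2 W θ v + pd2 U θ v * pd1 W θ v)
          + pd1 V θ v * pd2 V θ v * Real.sinh (W θ v) * Real.cosh (W θ v))
    (e4 : ∀ θ v, pd2 (pd1 M) θ v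
        = (1/2) * (-(pd1 U θ v * pd2 U θ v)
            + pd1 V θ v * pd2 V θ v * (Real.cosh (W θ v))^2
            + pd1 W θ v * pd2 W θ v))
    (H : ℝ → ℝ → ℝ)
    (hH : ∀ θ v, H θ v = pd1 (pd1 U) θ v
        - (1/2) * ((pd1 U θ v)^2 + (pd1 V θ v)^2 * (Real.cosh (W θ v))^2
            + (pd1 W θ v)^2)
        + pd1 U θ v * pd1 M θ v) :
    (∀ θ v, pd2 H θ v = pd2 U θ v * H θ v)
    ∧ (∀ v₀, (∀ θ, H θ v₀ = 0) → ∀ θ v, H θ v = 0) := by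
  obtain rfl : H = thetaConstraint M U V W := funext₂ hH
  have hH_v : ∀ θ v, HasDerivAt (fun s => thetaConstraint M U V W θ s)
      (pd2 U θ v * thetaConstraint M U V W θ v) v := fun θ v =>
    hasDerivAt_thetaConstraint (contDiff_infty.1 hM 2) (contDiff_infty.1 hU 3)
      (contDiff_infty.1 hV 2) (contDiff_infty.1 hW 2) ⟨e1, e2, e3, e4⟩
  refine ⟨fun θ v => (hH_v θ v).deriv, fun v₀ h₀ θ => ?_⟩
  exact eq_zero_of_hasDerivAt_eq_mul
    (fun s => hasDerivAt_pd2 (hU.differentiable (by simp) (θ, s))) (hH_v θ) (h₀ θ)
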